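/- Let n ≥ 1, i ∈ {1,…,n}, and U ⊆ [0,1]^n an open set (in the subspace topology) that separates the i-th opposite faces of [0,1]^n. Then there exists a compact path-connected subset S ⊆ U that separates the i-th opposite faces of [0,1]^n. -/

import Mathlib

def unitCube (n : ℕ) : Set (Fin n → ℝ) := Set.Icc 0 1

def face (n : ℕ) (i : Fin n) (v : ℝ) : Set (Fin n → ℝ) := {x ∈ unitCube n | x i = v}

/-- `A` connects the `i`-th opposite faces of the unit cube: some connected subset of `A`
meets both faces. -/
def Connects (n : ℕ) (i : Fin n) (A : Set (Fin n → ℝ)) : Prop :=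
  ∃ S ⊆ A, IsPreconnected S ∧ (S ∩ face n i 0).Nonempty ∧ (S ∩ face n i 1).Nonempty

/-- `A` separates the `i`-th opposite faces of the unit cube. -/
def Separates (n : ℕ) (i : Fin n) (A : Set (Fin n → ℝ)) : Prop :=
  ¬ Connects n i (unitCube n \ A)

/-- `U` is open in the subspace topology of the unit cube. -/
def OpenInCube (n : ℕ) (U : Set (Fin n → ℝ)) : Prop :=
  ∃ V : Set (Fin n → ℝ), IsOpen V ∧ U = V ∩ unitCube n

/-
The complement `X` of `U` in the cube is compact, and no connected subset of `X` meets both faces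
`{xᵢ = 0}` and `{xᵢ = 1}`. Passing to the (totally disconnected) space of connected components of
`X`, it splits into two disjoint closed parts; adding the faces gives disjoint closed sets
`L₀ ⊇ {xᵢ = 0}` and `L₁ ⊇ {xᵢ = 1}` covering `X`.

Cover the cube by finitely many closed convex pieces, each missing `L₀` or `L₁`, and regard two
pieces as adjacent when they meet. Let `B` be the cluster of pieces missing `L₁` that reaches the
face `{xᵢ = 0}`, and `C` the cluster of pieces outside `B` that reaches `{xᵢ = 1}`. Both `C` and
its complement are connected clusters, so the unions of their pieces are closed connected sets
covering the cube. The cube is unicoherent (a lifting argument through `ℝ → ℝ/ℤ`), hence their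
intersection `S` is connected, and being a finite union of convex sets it is path-connected.
A point of `S` lies in a piece of `C` meeting a piece of `B`, which keeps it out of `L₀ ∪ L₁`,
and `S` separates the faces since pieces touching `{xᵢ = 0}` lie outside `C` and pieces touching
`{xᵢ = 1}` inside it.
-/

open Set Topology Relation

universe u

theorem isPreconnected_inter_of_union_eq_univ {X : Type*} [TopologicalSpace X]
    [SimplyConnectedSpace X] [LocallyPathConnectedSpace X] [NormalSpace X] {A B : Set X}
    (hA : IsClosed A) (hB : IsClosed B) (hAB : A ∪ B = univ)
    (hA' : IsPreconnected A) (hB' : IsPreconnected B) : IsPreconnected (A ∩ B) := by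
  classical
  rw [isPreconnected_closed_iff]
  rintro s t hs ht hcover ⟨a, ha, has⟩ ⟨b, hb, hbt⟩
  by_contra hst
  obtain ⟨g, hg₀, hg₁, -⟩ := exists_continuous_zero_one_of_isClosed
    ((hA.inter hB).inter hs) ((hA.inter hB).inter ht) <|
      Set.disjoint_left.2 fun x hxs hxt => hst ⟨x, hxs.1, hxs.2, hxt.2⟩
  have hg : ∀ x ∈ A ∩ B, (g x : AddCircle (1 : ℝ)) = 0 := by
    intro x hx
    rcases hcover hx with hxs | hxt
    · rw [hg₀ ⟨hx, hxs⟩]; rfl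
    · rw [hg₁ ⟨hx, hxt⟩]; simp
  -- `f` is `g mod 1` on `A` and `0` on `B`. Its lift `F` is integer-valued on `B` and `F - g` is
  -- integer-valued on `A`, so both are constant, although `g` is `0` on `s` and `1` on `t`.
  let f : C(X, AddCircle (1 : ℝ)) := ⟨A.piecewise (fun x => (g x : AddCircle (1 : ℝ))) 0, by
    refine Continuous.piecewise (fun x hx => ?_) (by fun_prop) continuous_const
    refine hg x ⟨hA.frontier_subset hx, ?_⟩
    have : Aᶜ ⊆ B := fun y hy => (hAB.symm ▸ mem_univ y : y ∈ A ∪ B).resolve_left hy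
    exact closure_minimal this hB (frontier_subset_closure (frontier_compl A ▸ hx))⟩
  obtain ⟨F, -, hF⟩ := ((AddCircle.isCoveringMap_coe (1 : ℝ)).existsUnique_continuousMap_lifts
    f a (g a) (by simp [f, ha.1])).exists
  have hFf : ∀ x, (F x : AddCircle (1 : ℝ)) = f x := fun x => congrFun hF x
  have hdisc : IsDiscrete (AddSubgroup.zmultiples (1 : ℝ) : Set ℝ) :=
    isDiscrete_iff_discreteTopology.2 <|
      inferInstanceAs (DiscreteTopology (AddSubgroup.zmultiples (1 : ℝ)))
  have hFB : F a = F b := hB'.constant_of_mapsTo hdisc F.continuous.continuousOn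
    (fun x hx => (QuotientAddGroup.eq_zero_iff _).1 <| by
      rw [hFf]
      by_cases hxA : x ∈ A
      · simp [f, hxA, hg x ⟨hxA, hx⟩]
      · simp [f, hxA]) ha.2 hb.2
  have hFgA : F a - g a = F b - g b := hA'.constant_of_mapsTo hdisc
    (F.continuous.sub g.continuous).continuousOn
    (fun x hx => (QuotientAddGroup.eq_zero_iff _).1 <| by
      rw [Pi.sub_apply, QuotientAddGroup.mk_sub, hFf]
      simp [f, hx]) ha.1 hb.1
  have h0 : g a = 0 := hg₀ ⟨ha, has⟩
  have h1 : g b = 1 := hg₁ ⟨hb, hbt⟩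
  linarith

theorem Convex.isConnected_inter_of_union_eq {E : Type*} [NormedAddCommGroup E] [NormedSpace ℝ E]
    {K A B : Set E} (hK : Convex ℝ K) (hA : IsClosed A) (hB : IsClosed B) (hAB : A ∪ B = K)
    (hA' : IsPreconnected A) (hB' : IsPreconnected B) (hAne : A.Nonempty) (hBne : B.Nonempty) :
    IsConnected (A ∩ B) := by
  have hAK : A ⊆ K := hAB ▸ subset_union_left
  have hBK : B ⊆ K := hAB ▸ subset_union_right
  refine ⟨?_, ?_⟩
  · obtain ⟨x, -, hx⟩ := isPreconnected_closed_iff.1 hK.isPreconnected A B hA hB hAB.ge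
      (by rwa [inter_eq_right.2 hAK]) (by rwa [inter_eq_right.2 hBK])
    exact ⟨x, hx⟩
  have := hK.contractibleSpace (hAne.mono hAK)
  have := hK.locallyPathConnectedSpace
  have hval : IsInducing ((↑) : K → E) := .subtypeVal
  have hpre : ∀ {D : Set E}, D ⊆ K → (↑) '' ((↑) ⁻¹' D : Set K) = D := fun hD =>
    (Subtype.image_preimage_coe K _).trans (inter_eq_right.2 hD)
  rw [← hpre (inter_subset_left.trans hAK), preimage_inter, hval.isPreconnected_image]
  refine isPreconnected_inter_of_union_eq_univ (hA.preimage continuous_subtype_val)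
    (hB.preimage continuous_subtype_val) ?_ ?_ ?_
  · rw [← preimage_union, hAB, Subtype.coe_preimage_self]
  · rwa [← hval.isPreconnected_image, hpre hAK]
  · rwa [← hval.isPreconnected_image, hpre hBK]

theorem exists_isClopen_of_forall_isPreconnected {Y : Type*} [TopologicalSpace Y]
    [CompactSpace Y] [T2Space Y] {A B : Set Y} (hA : IsClosed A) (hB : IsClosed B)
    (h : ∀ S, IsPreconnected S → (S ∩ A).Nonempty → (S ∩ B).Nonempty → False) :
    ∃ Q, IsClopen Q ∧ A ⊆ Q ∧ Disjoint Q B := by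
  have hAB : ConnectedComponents.mk '' A ⊆ (ConnectedComponents.mk '' B)ᶜ := by
    rintro _ ⟨a, ha, rfl⟩ ⟨b, hb, hba⟩
    exact h _ isPreconnected_connectedComponent ⟨a, mem_connectedComponent, ha⟩
      ⟨b, ConnectedComponents.coe_eq_coe'.1 hba, hb⟩
  obtain ⟨C, hC, hAC, hCB⟩ := exists_clopen_of_closed_subset_open
    (hA.isCompact.image ConnectedComponents.continuous_coe).isClosed
    (hB.isCompact.image ConnectedComponents.continuous_coe).isClosed.isOpen_compl hAB
  exact ⟨_, hC.preimage ConnectedComponents.continuous_coe, image_subset_iff.1 hAC,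
    Set.disjoint_left.2 fun x hxC hxB => hCB hxC ⟨x, hxB, rfl⟩⟩

theorem IsCompact.exists_isClosed_disjoint_cover {X : Type*} [TopologicalSpace X] [T2Space X]
    {K A B : Set X} (hK : IsCompact K) (hA : IsClosed A) (hB : IsClosed B) (hAB : Disjoint A B)
    (h : ∀ S ⊆ K, IsPreconnected S → (S ∩ A).Nonempty → (S ∩ B).Nonempty → False) :
    ∃ L₀ L₁, IsClosed L₀ ∧ IsClosed L₁ ∧ Disjoint L₀ L₁ ∧ A ⊆ L₀ ∧ B ⊆ L₁ ∧ K ⊆ L₀ ∪ L₁ := by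
  have := isCompact_iff_compactSpace.1 hK
  obtain ⟨Q, hQ, hAQ, hQB⟩ := exists_isClopen_of_forall_isPreconnected
    (hA.preimage continuous_subtype_val) (hB.preimage continuous_subtype_val)
    fun S hS hSA hSB => h _ (Subtype.coe_image_subset K S)
      (hS.image _ continuous_subtype_val.continuousOn)
      (by rw [← image_inter_preimage]; exact hSA.image _)
      (by rw [← image_inter_preimage]; exact hSB.image _)
  have hcl : ∀ {Q' : Set K}, IsClosed Q' → IsClosed (((↑) : K → X) '' Q') := fun hQ' =>
    (hQ'.isCompact.image continuous_subtype_val).isClosed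
  refine ⟨(↑) '' Q ∪ A, (↑) '' Qᶜ ∪ B, (hcl hQ.isClosed).union hA,
    (hcl hQ.compl.isClosed).union hB, ?_, subset_union_right, subset_union_right, fun x hx => ?_⟩
  · refine disjoint_union_left.2
      ⟨disjoint_union_right.2 ⟨?_, ?_⟩, disjoint_union_right.2 ⟨?_, hAB⟩⟩
    · exact (disjoint_image_iff Subtype.val_injective).2 disjoint_compl_right
    · exact Set.disjoint_left.2 <| by
        rintro _ ⟨y, hyQ, rfl⟩ hyB
        exact Set.disjoint_left.1 hQB hyQ hyB
    · exact Set.disjoint_left.2 <| by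
        rintro _ hxA ⟨y, hyQ, rfl⟩
        exact hyQ (hAQ hxA)
  · by_cases hxQ : (⟨x, hx⟩ : K) ∈ Q
    exacts [.inl (.inl ⟨_, hxQ, rfl⟩), .inr (.inl ⟨_, hxQ, rfl⟩)]

section Linked

variable {α : Type*} {r : α → α → Prop} {S T : Set α} {a b : α}

def restrictRel (r : α → α → Prop) (S : Set α) (a b : α) : Prop := r a b ∧ a ∈ S ∧ b ∈ S

def LinkedOn (r : α → α → Prop) (S : Set α) : Prop :=
  ∀ a ∈ S, ∀ b ∈ S, ReflTransGen (restrictRel r S) a b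

def componentIn (r : α → α → Prop) (S : Set α) (a : α) : Set α :=
  {b | ReflTransGen (restrictRel r S) a b}

instance [Std.Symm r] : Std.Symm (restrictRel r S) :=
  ⟨fun _ _ h => ⟨Std.Symm.symm _ _ h.1, h.2.2, h.2.1⟩⟩

theorem reflTransGen_restrictRel_mono (h : S ⊆ T) :
    ReflTransGen (restrictRel r S) a b → ReflTransGen (restrictRel r T) a b :=
  ReflTransGen.mono (fun _ _ hr => ⟨hr.1, h hr.2.1, h hr.2.2⟩) a b

theorem componentIn_subset (ha : a ∈ S) : componentIn r S a ⊆ S := fun b hb => by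
  rcases hb.cases_tail with rfl | ⟨_, _, h⟩
  exacts [ha, h.2.2]

theorem mem_componentIn_of_rel {x y : α} (hx : x ∈ componentIn r S a) (hxS : x ∈ S)
    (hy : y ∈ S) (hxy : r x y) : y ∈ componentIn r S a :=
  ReflTransGen.tail hx ⟨hxy, hxS, hy⟩

theorem LinkedOn.subset_componentIn (hT : LinkedOn r T) (hTS : T ⊆ S) (ha : a ∈ T) :
    T ⊆ componentIn r S a :=
  fun _ hb => reflTransGen_restrictRel_mono hTS (hT a ha _ hb)

theorem linkedOn_componentIn [Std.Symm r] : LinkedOn r (componentIn r S a) := by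
  have key : ∀ b ∈ componentIn r S a, ReflTransGen (restrictRel r (componentIn r S a)) a b := by
    intro b hb
    induction hb with
    | refl => rfl
    | tail hab hbc ih => exact ih.tail ⟨hbc.1, hab, hab.tail hbc⟩
  exact fun b hb c hc => (Std.Symm.symm _ _ (key b hb)).trans (key c hc)

-- Walking from a point outside the component `D` towards `S`, one never enters `D`.
theorem linkedOn_compl_componentIn [Std.Symm r] (huniv : LinkedOn r univ)
    (hS : LinkedOn r S) (ha : a ∈ S) (hb : b ∉ S) : LinkedOn r (componentIn r Sᶜ b)ᶜ := by
  set D := componentIn r Sᶜ b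
  have hSD : S ⊆ Dᶜ := fun x hxS hxD => componentIn_subset hb hxD hxS
  have hreach : ∀ y ∈ Dᶜ, ReflTransGen (restrictRel r Dᶜ) y a := by
    intro y hy
    have : ∀ z, ReflTransGen r y z → (∃ s ∈ S, ReflTransGen (restrictRel r Dᶜ) y s) ∨
        (z ∉ S ∧ z ∈ Dᶜ ∧ ReflTransGen (restrictRel r Dᶜ) y z) := by
      intro z hz
      induction hz with
      | refl =>
        by_cases hyS : y ∈ S
        exacts [.inl ⟨y, hyS, .refl⟩, .inr ⟨hyS, hy, .refl⟩]
      | @tail z w _ hzw ih =>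
        rcases ih with h | ⟨hzS, hzD, hyz⟩
        · exact .inl h
        have hwD : w ∈ Dᶜ := fun hwD => hzD <|
          mem_componentIn_of_rel hwD (componentIn_subset hb hwD) hzS (Std.Symm.symm _ _ hzw)
        by_cases hwS : w ∈ S
        · exact .inl ⟨w, hwS, hyz.tail ⟨hzw, hzD, hwD⟩⟩
        · exact .inr ⟨hwS, hwD, hyz.tail ⟨hzw, hzD, hwD⟩⟩
    rcases this a (ReflTransGen.mono (fun _ _ h => h.1) y a (huniv y trivial a trivial)) with
      ⟨s, hs, hys⟩ | ⟨haS, -⟩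
    · exact hys.trans (reflTransGen_restrictRel_mono hSD (hS s hs a ha))
    · exact absurd ha haS
  exact fun x hx y hy => (hreach x hx).trans (Std.Symm.symm _ _ (hreach y hy))

-- `C` is the component through `b` of the complement of `B`, the component of `G` through `a`.
theorem exists_linkedOn_separating [Std.Symm r] {G Z₀ Z₁ : Set α} (huniv : LinkedOn r univ)
    (hZ₀ : LinkedOn r Z₀) (ha : a ∈ Z₀) (hZ₀G : Z₀ ⊆ G)
    (hZ₁ : LinkedOn r Z₁) (hb : b ∈ Z₁) (hZ₁G : Disjoint Z₁ G) :
    ∃ C, LinkedOn r C ∧ LinkedOn r Cᶜ ∧ Disjoint Z₀ C ∧ Z₁ ⊆ C ∧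
      ∀ i ∈ C, ∀ j ∉ C, r i j → i ∉ G ∧ j ∈ G := by
  set B := componentIn r G a
  have hBG : B ⊆ G := componentIn_subset (hZ₀G ha)
  have hZ₁B : Z₁ ⊆ Bᶜ := fun x hx hxB => hZ₁G.ne_of_mem hx (hBG hxB) rfl
  have hCB : componentIn r Bᶜ b ⊆ Bᶜ := componentIn_subset (hZ₁B hb)
  refine ⟨componentIn r Bᶜ b, linkedOn_componentIn,
    linkedOn_compl_componentIn huniv linkedOn_componentIn .refl (hZ₁B hb),
    Set.disjoint_left.2 fun x hx hxC => hCB hxC (hZ₀.subset_componentIn hZ₀G ha hx),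
    hZ₁.subset_componentIn hZ₁B hb, fun i hi j hj hij => ?_⟩
  have hjB : j ∈ B := by_contra fun hjB => hj (mem_componentIn_of_rel hi (hCB hi) hjB hij)
  exact ⟨fun hiG => hCB hi (mem_componentIn_of_rel hjB (hBG hjB) hiG (Std.Symm.symm _ _ hij)),
    hBG hjB⟩

end Linked

section Cover

variable {X : Type*} [TopologicalSpace X] {ι : Type*}

def Meets (P : ι → Set X) (i j : ι) : Prop := (P i ∩ P j).Nonempty

instance {P : ι → Set X} : Std.Symm (Meets P) := ⟨fun i j h => by rwa [Meets, inter_comm]⟩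

theorem IsPreconnected.linkedOn_of_cover {K : Set X} (hK : IsPreconnected K) {P : ι → Set X}
    {s : Set ι} (hs : s.Finite) (hP : ∀ i ∈ s, IsClosed (P i)) (hKP : K ⊆ ⋃ i ∈ s, P i)
    (hmeet : ∀ i ∈ s, (K ∩ P i).Nonempty) : LinkedOn (Meets P) s := by
  intro a ha b hb
  set R := {i ∈ s | ReflTransGen (restrictRel (Meets P) s) a i}
  have hstep : ∀ i ∈ R, ∀ j ∈ s, ∀ x ∈ P i, x ∈ P j → j ∈ R :=
    fun i hi j hj x hxi hxj => ⟨hj, hi.2.tail ⟨⟨x, hxi, hxj⟩, hi.1, hj⟩⟩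
  have hsplit := isPreconnected_iff_subset_of_disjoint_closed.1 hK (⋃ i ∈ R, P i)
    (⋃ i ∈ s \ R, P i) ((hs.subset (sep_subset _ _)).isClosed_biUnion fun i hi => hP i hi.1)
    ((hs.subset sdiff_subset).isClosed_biUnion fun i hi => hP i hi.1)
    (fun x hx => by
      obtain ⟨i, hi, hxi⟩ := mem_iUnion₂.1 (hKP hx)
      by_cases hiR : i ∈ R
      exacts [.inl (mem_biUnion hiR hxi), .inr (mem_biUnion ⟨hi, hiR⟩ hxi)])
    (eq_empty_of_forall_notMem fun x ⟨_, hxR, hxR'⟩ => by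
      obtain ⟨i, hi, hxi⟩ := mem_iUnion₂.1 hxR
      obtain ⟨j, hj, hxj⟩ := mem_iUnion₂.1 hxR'
      exact hj.2 (hstep i hi j hj.1 x hxi hxj))
  obtain ⟨x, hxK, hxa⟩ := hmeet a ha
  obtain hKR | hKR' := hsplit
  · obtain ⟨y, hyK, hyb⟩ := hmeet b hb
    obtain ⟨i, hi, hyi⟩ := mem_iUnion₂.1 (hKR hyK)
    exact (hstep i hi b hb y hyi hyb).2
  · obtain ⟨i, hi, hxi⟩ := mem_iUnion₂.1 (hKR' hxK)
    exact absurd (hstep a ⟨ha, .refl⟩ i hi.1 x hxa hxi) hi.2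

theorem IsPreconnected.biUnion_of_linkedOn {P : ι → Set X} {s : Set ι}
    (hP : ∀ i ∈ s, IsPreconnected (P i)) (hs : LinkedOn (Meets P) s) :
    IsPreconnected (⋃ i ∈ s, P i) :=
  .biUnion_of_reflTransGen hP fun i hi j hj =>
    ReflTransGen.mono (fun _ _ h => ⟨h.1, h.2.1⟩) i j (hs i hi j hj)

theorem IsConnected.isPathConnected_of_cover {S : Set X} (hS : IsConnected S) {Q : ι → Set X}
    {t : Set ι} (ht : t.Finite) (hQ : ∀ i ∈ t, IsClosed (Q i) ∧ IsPathConnected (Q i))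
    (hSQ : S = ⋃ i ∈ t, Q i) : IsPathConnected S := by
  subst hSQ
  have hQS : ∀ i ∈ t, Q i ⊆ ⋃ i ∈ t, Q i := fun i hi => subset_biUnion_of_mem hi
  have hlink := hS.2.linkedOn_of_cover ht (fun i hi => (hQ i hi).1) subset_rfl
    fun i hi => (hQ i hi).2.nonempty.mono fun x hx => ⟨hQS i hi hx, hx⟩
  obtain ⟨x, hx⟩ := hS.1
  obtain ⟨a, ha, hxa⟩ := mem_iUnion₂.1 hx
  have hjoin : ∀ b, ReflTransGen (restrictRel (Meets Q) t) a b →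
      ∀ y ∈ Q b, JoinedIn (⋃ i ∈ t, Q i) x y := by
    intro b hab
    induction hab with
    | refl => exact fun y hy => ((hQ a ha).2.joinedIn x hxa y hy).mono (hQS a ha)
    | @tail b c _ hbc ih =>
      obtain ⟨z, hzb, hzc⟩ := hbc.1
      exact fun y hy => (ih z hzb).trans
        (((hQ c hbc.2.2).2.joinedIn z hzc y hy).mono (hQS c hbc.2.2))
  refine ⟨x, hx, fun {y} hy => ?_⟩
  obtain ⟨b, hb, hyb⟩ := mem_iUnion₂.1 hy
  exact hjoin b (hlink a ha b hb) _ hyb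

end Cover

theorem IsCompact.exists_finite_convex_cover {E : Type u} [NormedAddCommGroup E]
    [NormedSpace ℝ E] {K : Set E} (hK : IsCompact K) (hKc : Convex ℝ K) {c : Set (Set E)}
    (hc : ∀ u ∈ c, IsOpen u) (hKc' : K ⊆ ⋃₀ c) :
    ∃ (ι : Type u) (_ : Finite ι) (P : ι → Set E), (∀ i, IsClosed (P i) ∧ Convex ℝ (P i) ∧
      (P i).Nonempty ∧ P i ⊆ K ∧ ∃ u ∈ c, P i ⊆ u) ∧ K ⊆ ⋃ i, P i := by
  obtain ⟨δ, hδ, hball⟩ := lebesgue_number_lemma_of_metric_sUnion hK hc hKc'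
  obtain ⟨t, htK, ht, hKt⟩ := hK.finite_cover_balls (half_pos hδ)
  refine ⟨t, ht.to_subtype, fun x => Metric.closedBall (x : E) (δ / 2) ∩ K,
    fun x => ⟨Metric.isClosed_closedBall.inter hK.isClosed, (convex_closedBall _ _).inter hKc,
      ⟨x, Metric.mem_closedBall_self (half_pos hδ).le, htK x.2⟩, inter_subset_right, ?_⟩, ?_⟩
  · obtain ⟨u, hu, hxu⟩ := hball x (htK x.2)
    exact ⟨u, hu, inter_subset_left.trans
      ((Metric.closedBall_subset_ball (half_lt_self hδ)).trans hxu)⟩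
  · intro y hy
    obtain ⟨x, hx, hyx⟩ := mem_iUnion₂.1 (hKt hy)
    exact mem_iUnion.2 ⟨⟨x, hx⟩, Metric.ball_subset_closedBall hyx, hy⟩

section Interface

variable {X : Type*} {ι : Type*} {P : ι → Set X} {C : Set ι} {K : Set X}

def interface (P : ι → Set X) (C : Set ι) : Set X := (⋃ i ∈ C, P i) ∩ ⋃ i ∈ Cᶜ, P i

theorem mem_interface {x : X} : x ∈ interface P C ↔ ∃ i ∈ C, ∃ j ∉ C, x ∈ P i ∧ x ∈ P j := by
  simp only [interface, mem_inter_iff, mem_iUnion₂]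
  exact ⟨fun ⟨⟨i, hi, hxi⟩, ⟨j, hj, hxj⟩⟩ => ⟨i, hi, j, hj, hxi, hxj⟩,
    fun ⟨i, hi, j, hj, hxi, hxj⟩ => ⟨⟨i, hi, hxi⟩, ⟨j, hj, hxj⟩⟩⟩

theorem interface_subset (hPK : ∀ i, P i ⊆ K) : interface P C ⊆ K := fun _ hx => by
  obtain ⟨i, -, -, -, hxi, -⟩ := mem_interface.1 hx
  exact hPK i hxi

theorem isClosed_interface [TopologicalSpace X] [Finite ι] (hP : ∀ i, IsClosed (P i)) :
    IsClosed (interface P C) :=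
  ((toFinite _).isClosed_biUnion fun i _ => hP i).inter
    ((toFinite _).isClosed_biUnion fun i _ => hP i)

theorem interface_separates [TopologicalSpace X] [Finite ι] (hP : ∀ i, IsClosed (P i))
    (hKP : K ⊆ ⋃ i, P i) {F₀ F₁ : Set X} (h₀ : Disjoint {i | (P i ∩ F₀).Nonempty} C)
    (h₁ : {i | (P i ∩ F₁).Nonempty} ⊆ C) {T : Set X} (hT : IsPreconnected T)
    (hTK : T ⊆ K \ interface P C) (hT₀ : (T ∩ F₀).Nonempty) (hT₁ : (T ∩ F₁).Nonempty) :
    False := by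
  obtain ⟨y, hyT, hy⟩ := hT₀
  obtain ⟨z, hzT, hz⟩ := hT₁
  obtain ⟨x, hxT, hxC, hxC'⟩ := hT (⋃ i ∈ Cᶜ, P i)ᶜ (⋃ i ∈ C, P i)ᶜ
    ((toFinite _).isClosed_biUnion fun i _ => hP i).isOpen_compl
    ((toFinite _).isClosed_biUnion fun i _ => hP i).isOpen_compl
    (fun x hx => not_and_or.1 fun h => (hTK hx).2 ⟨h.2, h.1⟩)
    ⟨z, hzT, by
      simp only [mem_compl_iff, mem_iUnion, not_exists]
      exact fun i hi hzi => hi (h₁ ⟨z, hzi, hz⟩)⟩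
    ⟨y, hyT, by
      simp only [mem_compl_iff, mem_iUnion, not_exists]
      exact fun i hi hyi => Set.disjoint_left.1 h₀ ⟨y, hyi, hy⟩ hi⟩
  obtain ⟨i, hxi⟩ := mem_iUnion.1 (hKP (hTK hxT).1)
  by_cases hi : i ∈ C
  exacts [hxC' (mem_biUnion hi hxi), hxC (mem_biUnion hi hxi)]

-- With `G` the pieces missing `L₁`, every edge leaving `C` goes from a piece meeting `L₁`
-- (hence missing `L₀`) to a piece missing `L₁`.
theorem exists_interface_disjoint {F₀ F₁ L₀ L₁ : Set X}
    (hPL : ∀ i, Disjoint (P i) L₀ ∨ Disjoint (P i) L₁) (hFL₀ : F₀ ⊆ L₀) (hFL₁ : F₁ ⊆ L₁)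
    (huniv : LinkedOn (Meets P) univ) (h₀ : LinkedOn (Meets P) {i | (P i ∩ F₀).Nonempty})
    (h₁ : LinkedOn (Meets P) {i | (P i ∩ F₁).Nonempty}) {i₀ i₁ : ι}
    (hi₀ : (P i₀ ∩ F₀).Nonempty) (hi₁ : (P i₁ ∩ F₁).Nonempty) :
    ∃ C, LinkedOn (Meets P) C ∧ LinkedOn (Meets P) Cᶜ ∧ Disjoint {i | (P i ∩ F₀).Nonempty} C ∧
      {i | (P i ∩ F₁).Nonempty} ⊆ C ∧ Disjoint (interface P C) (L₀ ∪ L₁) := by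
  obtain ⟨C, hC, hC', hZ₀, hZ₁, hedge⟩ := exists_linkedOn_separating
    (G := {i | Disjoint (P i) L₁}) huniv h₀ hi₀
    (fun i ⟨x, hxi, hx⟩ => (hPL i).resolve_left (Set.not_disjoint_iff.2 ⟨x, hxi, hFL₀ hx⟩))
    h₁ hi₁ (Set.disjoint_left.2 fun i ⟨x, hxi, hx⟩ hi => Set.disjoint_left.1 hi hxi (hFL₁ hx))
  refine ⟨C, hC, hC', hZ₀, hZ₁, Set.disjoint_left.2 fun x hx hxL => ?_⟩
  obtain ⟨i, hi, j, hj, hxi, hxj⟩ := mem_interface.1 hx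
  obtain ⟨hiG, hjG⟩ := hedge i hi j hj ⟨x, hxi, hxj⟩
  rcases hxL with hx₀ | hx₁
  · exact Set.disjoint_left.1 ((hPL i).resolve_right hiG) hxi hx₀
  · exact Set.disjoint_left.1 hjG hxj hx₁

theorem isPathConnected_interface {E : Type*} [NormedAddCommGroup E] [NormedSpace ℝ E]
    [Finite ι] {K : Set E} {P : ι → Set E} (hK : Convex ℝ K) (hPc : ∀ i, IsClosed (P i))
    (hPconv : ∀ i, Convex ℝ (P i)) (hPne : ∀ i, (P i).Nonempty) (hPK : ∀ i, P i ⊆ K)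
    (hKP : K ⊆ ⋃ i, P i) (hC : LinkedOn (Meets P) C) (hC' : LinkedOn (Meets P) Cᶜ)
    (hCne : C.Nonempty) (hC'ne : Cᶜ.Nonempty) : IsPathConnected (interface P C) := by
  have hunion : (⋃ i ∈ C, P i) ∪ (⋃ i ∈ Cᶜ, P i) = K := by
    rw [← biUnion_union, union_compl_self, biUnion_univ]
    exact (iUnion_subset hPK).antisymm hKP
  have hΓ := hK.isConnected_inter_of_union_eq ((toFinite C).isClosed_biUnion fun i _ => hPc i)
    ((toFinite Cᶜ).isClosed_biUnion fun i _ => hPc i) hunion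
    (.biUnion_of_linkedOn (fun i _ => (hPconv i).isPreconnected) hC)
    (.biUnion_of_linkedOn (fun i _ => (hPconv i).isPreconnected) hC')
    (hCne.elim fun i hi => (hPne i).mono (subset_biUnion_of_mem hi))
    (hC'ne.elim fun i hi => (hPne i).mono (subset_biUnion_of_mem hi))
  refine hΓ.isPathConnected_of_cover (Q := fun p : ι × ι => P p.1 ∩ P p.2)
    (t := {p | p.1 ∈ C ∧ p.2 ∉ C ∧ Meets P p.1 p.2}) (toFinite _)
    (fun p hp => ⟨(hPc _).inter (hPc _), ((hPconv _).inter (hPconv _)).isPathConnected hp.2.2⟩) ?_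
  ext x
  simp only [mem_iUnion, exists_prop, Prod.exists, mem_ofPred_eq]
  constructor
  · rintro hx
    obtain ⟨i, hi, j, hj, hxi, hxj⟩ := mem_interface.1 hx
    exact ⟨i, j, ⟨hi, hj, x, hxi, hxj⟩, hxi, hxj⟩
  · rintro ⟨i, j, ⟨hi, hj, -⟩, hxi, hxj⟩
    exact mem_interface.2 ⟨i, hi, j, hj, hxi, hxj⟩

end Interface

theorem exists_isPathConnected_separating {E : Type*} [NormedAddCommGroup E] [NormedSpace ℝ E]
    {K : Set E} (hK : IsCompact K) (hKc : Convex ℝ K) {F₀ F₁ L₀ L₁ : Set E}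
    (hF₀ : IsPreconnected F₀) (hF₁ : IsPreconnected F₁) (hF₀K : F₀ ⊆ K) (hF₁K : F₁ ⊆ K)
    (hF₀ne : F₀.Nonempty) (hF₁ne : F₁.Nonempty) (hL₀ : IsClosed L₀) (hL₁ : IsClosed L₁)
    (hL : Disjoint L₀ L₁) (hFL₀ : F₀ ⊆ L₀) (hFL₁ : F₁ ⊆ L₁) :
    ∃ S ⊆ K, Disjoint S (L₀ ∪ L₁) ∧ IsCompact S ∧ IsPathConnected S ∧
      ∀ T ⊆ K \ S, IsPreconnected T → (T ∩ F₀).Nonempty → (T ∩ F₁).Nonempty → False := by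
  obtain ⟨ι, _, P, hP, hKP⟩ := hK.exists_finite_convex_cover hKc (c := {L₀ᶜ, L₁ᶜ})
    (by simpa using ⟨hL₀, hL₁⟩)
    (by rw [sUnion_pair, ← compl_inter, hL.inter_eq, compl_empty]; exact subset_univ K)
  have hPL : ∀ i, Disjoint (P i) L₀ ∨ Disjoint (P i) L₁ := fun i => by
    simpa [subset_compl_iff_disjoint_right] using (hP i).2.2.2.2
  have hlinked : ∀ F ⊆ K, IsPreconnected F → LinkedOn (Meets P) {i | (P i ∩ F).Nonempty} :=
    fun F hFK hF => hF.linkedOn_of_cover (toFinite _) (fun i _ => (hP i).1)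
      (fun x hx => by
        obtain ⟨i, hxi⟩ := mem_iUnion.1 (hKP (hFK hx))
        exact mem_biUnion (show i ∈ {i | (P i ∩ F).Nonempty} from ⟨x, hxi, hx⟩) hxi)
      (fun i hi => by rwa [inter_comm])
  have huniv : {i | (P i ∩ K).Nonempty} = univ :=
    eq_univ_of_forall fun i => by simpa [inter_eq_left.2 (hP i).2.2.2.1] using (hP i).2.2.1
  have hpiece : ∀ {F : Set E}, F ⊆ K → F.Nonempty → ∃ i, (P i ∩ F).Nonempty := fun hFK ⟨x, hx⟩ =>
    (mem_iUnion.1 (hKP (hFK hx))).imp fun i hxi => ⟨x, hxi, hx⟩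
  obtain ⟨i₀, hi₀⟩ := hpiece hF₀K hF₀ne
  obtain ⟨i₁, hi₁⟩ := hpiece hF₁K hF₁ne
  obtain ⟨C, hC, hC', h₀, h₁, hCL⟩ := exists_interface_disjoint hPL hFL₀ hFL₁
    (huniv ▸ hlinked K subset_rfl hKc.isPreconnected) (hlinked F₀ hF₀K hF₀)
    (hlinked F₁ hF₁K hF₁) hi₀ hi₁
  have hCK : interface P C ⊆ K := interface_subset fun i => (hP i).2.2.2.1
  refine ⟨interface P C, hCK, hCL, hK.of_isClosed_subset (isClosed_interface fun i => (hP i).1) hCK,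
    isPathConnected_interface hKc (fun i => (hP i).1) (fun i => (hP i).2.1)
      (fun i => (hP i).2.2.1) (fun i => (hP i).2.2.2.1) hKP hC hC' ⟨i₁, h₁ hi₁⟩
      ⟨i₀, fun h => Set.disjoint_left.1 h₀ hi₀ h⟩,
    fun T hTK hT => interface_separates (fun i => (hP i).1) hKP h₀ h₁ hT hTK⟩

theorem isClosed_face (n : ℕ) (i : Fin n) (v : ℝ) : IsClosed (face n i v) :=
  isClosed_Icc.inter (isClosed_eq (continuous_apply i) continuous_const)

theorem convex_face (n : ℕ) (i : Fin n) (v : ℝ) : Convex ℝ (face n i v) :=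
  (convex_Icc 0 1).inter
    (convex_hyperplane (LinearMap.proj (R := ℝ) (φ := fun _ : Fin n => ℝ) i).isLinear v :)

theorem disjoint_face_zero_one (n : ℕ) (i : Fin n) : Disjoint (face n i 0) (face n i 1) :=
  Set.disjoint_left.2 fun _ h₀ h₁ => zero_ne_one (h₀.2.symm.trans h₁.2)

theorem stmt11 {n : ℕ} (i : Fin n) (U : Set (Fin n → ℝ))
    (hU : OpenInCube n U) (hsep : Separates n i U) :
    ∃ S ⊆ U, IsCompact S ∧ IsPathConnected S ∧ Separates n i S := by
  obtain ⟨V, hV, rfl⟩ := hU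
  rw [Separates, sdiff_inter_self_eq_sdiff] at hsep
  obtain ⟨L₀, L₁, hL₀, hL₁, hL, hFL₀, hFL₁, hXL⟩ :=
    (isCompact_Icc.diff hV : IsCompact (unitCube n \ V)).exists_isClosed_disjoint_cover
      (isClosed_face n i 0) (isClosed_face n i 1) (disjoint_face_zero_one n i)
      fun S hS hSc h₀ h₁ => hsep ⟨S, hS, hSc, h₀, h₁⟩
  obtain ⟨S, hSK, hSL, hS, hSp, hsepS⟩ := exists_isPathConnected_separating (K := unitCube n)
    isCompact_Icc (convex_Icc 0 1) (convex_face n i 0).isPreconnected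
    (convex_face n i 1).isPreconnected (fun _ hx => hx.1) (fun _ hx => hx.1)
    ⟨0, ⟨le_rfl, zero_le_one⟩, rfl⟩ ⟨1, ⟨zero_le_one, le_rfl⟩, rfl⟩ hL₀ hL₁ hL hFL₀ hFL₁
  refine ⟨S, fun x hx => ⟨by_contra fun hxV => Set.disjoint_left.1 hSL hx (hXL ⟨hSK hx, hxV⟩),
    hSK hx⟩, hS, hSp, fun ⟨T, hT, hTc, h₀, h₁⟩ => hsepS T hT hTc h₀ h₁⟩
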